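/- (Uniqueness.) Suppose a map N' sending each function f : ℤ^d → ℝ vanishing outside B to a function N' f vanishing outside B^c ∖ ∂B satisfies E[f(Z^x_t)] = E[N' f(Z^x_t)] for every (t,x) ∈ ℕ × ∂B with t ≥ 1 and every f vanishing outside B. Then N' f = N f for every such f, where N is the discrete Carr–Nadtochiy transform. -/

import Mathlib

open Finset

/-- The `i`-th standard unit vector `e_i` in `ℤ^(d+1)`. -/
def unitVec (d : ℕ) (i : Fin (d + 1)) : Fin (d + 1) → ℤ := Pi.single i 1

/-- The ℓ¹-norm `‖v‖₁ = ∑ i, |v i|` on `ℤ^(d+1)`. -/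
def norm1 {d : ℕ} (v : Fin (d + 1) → ℤ) : ℤ := ∑ i, |v i|

/-- `P t x z` represents the `t`-step transition probability `P(Z^x_t = z)` of a
time-homogeneous Markov chain on `ℤ^(d+1)` which at each step moves by `± e_i`,
with all `2(d+1)` one-step probabilities strictly positive and summing to `1`. -/
structure IsRandomWalk (d : ℕ)
    (P : ℕ → (Fin (d + 1) → ℤ) → (Fin (d + 1) → ℤ) → ℝ) : Prop where
  nonneg : ∀ t x z, 0 ≤ P t x z
  init : ∀ x z, P 0 x z = if z = x then 1 else 0
  step : ∀ t x z, P (t + 1) x z =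
      ∑ i, P 1 x (x + unitVec d i) * P t (x + unitVec d i) z
        + ∑ i, P 1 x (x - unitVec d i) * P t (x - unitVec d i) z
  sum_one : ∀ x, (∑ i, P 1 x (x + unitVec d i)) + (∑ i, P 1 x (x - unitVec d i)) = 1
  pos_add : ∀ x i, 0 < P 1 x (x + unitVec d i)
  pos_sub : ∀ x i, 0 < P 1 x (x - unitVec d i)

/-- The expectation `E[h(Z^x_t)]` (the law of `Z^x_t` has finite support). -/
noncomputable def expect {d : ℕ} (P : ℕ → (Fin (d + 1) → ℤ) → (Fin (d + 1) → ℤ) → ℝ)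
    (t : ℕ) (x : Fin (d + 1) → ℤ) (h : (Fin (d + 1) → ℤ) → ℝ) : ℝ :=
  ∑ᶠ z, h z * P t x z

/-- The finite set `S(t,x) = {(s,y) ∈ ℕ × ∂B : 1 ≤ s ≤ t, ‖y − x‖₁ ≤ t − s,
and t − s − ‖y − x‖₁ is even}`. -/
noncomputable def Sset (d t : ℕ) (x : Fin (d + 1) → ℤ) : Finset (ℕ × (Fin (d + 1) → ℤ)) :=
  ((Finset.Icc 1 t) ×ˢ (Fintype.piFinset fun i => Finset.Icc (x i - t) (x i + t))).filter
    (fun p => p.2 (Fin.last d) = 0 ∧ norm1 (p.2 - x) ≤ (t : ℤ) - p.1 ∧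
      Even ((t : ℤ) - p.1 - norm1 (p.2 - x)))

/-- The matrix `W^+_{t,x}`, with entries `(W^+)_{(s,y),(u,z)} = P(Z^y_s = z + u e_d)`. -/
noncomputable def Wplus {d : ℕ} (P : ℕ → (Fin (d + 1) → ℤ) → (Fin (d + 1) → ℤ) → ℝ)
    (t : ℕ) (x : Fin (d + 1) → ℤ) :
    Matrix {p // p ∈ Sset d t x} {p // p ∈ Sset d t x} ℝ :=
  fun p q => P p.1.1 p.1.2 (q.1.2 + Pi.single (Fin.last d) (q.1.1 : ℤ))

/-- The matrix `W^-_{t,x}`, with entries `(W^-)_{(s,y),(u,z)} = P(Z^y_s = z - u e_d)`. -/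
noncomputable def Wminus {d : ℕ} (P : ℕ → (Fin (d + 1) → ℤ) → (Fin (d + 1) → ℤ) → ℝ)
    (t : ℕ) (x : Fin (d + 1) → ℤ) :
    Matrix {p // p ∈ Sset d t x} {p // p ∈ Sset d t x} ℝ :=
  fun p q => P p.1.1 p.1.2 (q.1.2 - Pi.single (Fin.last d) (q.1.1 : ℤ))

/-- `N_{t,x} = (W^-_{t,x})⁻¹ W^+_{t,x}`. -/
noncomputable def Nmat {d : ℕ} (P : ℕ → (Fin (d + 1) → ℤ) → (Fin (d + 1) → ℤ) → ℝ)
    (t : ℕ) (x : Fin (d + 1) → ℤ) :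
    Matrix {p // p ∈ Sset d t x} {p // p ∈ Sset d t x} ℝ :=
  (Wminus P t x)⁻¹ * Wplus P t x

/-- The extended transform `N f`, vanishing outside `{w : w_d < 0}`, defined at a point
`w = x − t e_d` (with `x ∈ ∂B`, `t ≥ 1`) as the `(t,x)`-component of `N_{t,x}` applied to
the vector `(f(z + u e_d))_{(u,z) ∈ S(t,x)}`.  (Note that `(t,x) ∈ S(t,x)` always holds
in this situation, so the guard below is satisfied exactly when `w_d < 0`.) -/
noncomputable def Ntrans {d : ℕ} (P : ℕ → (Fin (d + 1) → ℤ) → (Fin (d + 1) → ℤ) → ℝ)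
    (f : (Fin (d + 1) → ℤ) → ℝ) : (Fin (d + 1) → ℤ) → ℝ := fun w =>
  if hm : ((-(w (Fin.last d))).toNat, Function.update w (Fin.last d) 0) ∈
      Sset d (-(w (Fin.last d))).toNat (Function.update w (Fin.last d) 0) then
    (Nmat P (-(w (Fin.last d))).toNat (Function.update w (Fin.last d) 0)).mulVec
      (fun p => f (p.1.2 + Pi.single (Fin.last d) (p.1.1 : ℤ)))
      ⟨((-(w (Fin.last d))).toNat, Function.update w (Fin.last d) 0), hm⟩
  else 0

/-!
Fix `(t,x)` and put `v = (f(z + u e_d))_{(u,z) ∈ S(t,x)}`, `v' = (N'f(z - u e_d))_{(u,z) ∈ S(t,x)}`.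
Started from `y ∈ ∂B` and run for `s` steps with `(s,y) ∈ S(t,x)`, the walk can only hit points
`z ± u e_d` off `∂B` with `(u,z) ∈ S(t,x)`, so the hypothesis `E[f(Z^y_s)] = E[N'f(Z^y_s)]`
reads `(W^+ v)_{(s,y)} = (W^- v')_{(s,y)}`. Ordered by time, `W^-` is triangular with positive
diagonal: reaching depth `u` below `∂B` takes at least `u` steps, and in exactly `u` steps only the
straight path down does it. Hence `v' = N_{t,x} v`, whose `(t,x)` entry is `N'f(x - t e_d)`.
-/

open Matrix

theorem Matrix.inv_mul_mulVec_eq {n α : Type*} [Fintype n] [DecidableEq n] [CommRing α]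
    {A B : Matrix n n α} (hA : IsUnit A.det) {u v : n → α} (h : A *ᵥ v = B *ᵥ u) :
    (A⁻¹ * B) *ᵥ u = v := by
  rw [← mulVec_mulVec, ← h, mulVec_mulVec, nonsing_inv_mul _ hA, one_mulVec]

theorem Matrix.det_eq_prod_diag_of_blockTriangular {m α R : Type*} [Fintype m] [DecidableEq m]
    [LinearOrder α] [CommRing R] {M : Matrix m m R} {b : m → α} (hM : M.BlockTriangular b)
    (hblock : ∀ i j, b i = b j → i ≠ j → M i j = 0) : M.det = ∏ i, M i i := by
  rw [hM.det]
  have hdiag : ∀ a, M.toSquareBlock b a = diagonal fun i : {i // b i = a} => M i i := by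
    intro a
    ext i j
    by_cases hij : i = j
    · subst hij; simp [toSquareBlock_def]
    · rw [diagonal_apply_ne _ hij, toSquareBlock_def, of_apply]
      exact hblock _ _ (i.2.trans j.2.symm) fun h => hij (Subtype.ext h)
  simp only [hdiag, det_diagonal]
  rw [← prod_fiberwise_of_maps_to (g := b) (t := image b univ) fun i _ =>
    mem_image_of_mem b (mem_univ i)]
  exact prod_congr rfl fun a _ =>
    (prod_subtype {i | b i = a} (fun i => by simp) fun i => M i i).symm

section Norm1

variable {d : ℕ}

theorem norm1_nonneg (v : Fin (d + 1) → ℤ) : 0 ≤ norm1 v :=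
  sum_nonneg fun _ _ => abs_nonneg _

theorem abs_apply_le_norm1 (v : Fin (d + 1) → ℤ) (i : Fin (d + 1)) : |v i| ≤ norm1 v :=
  single_le_sum (f := fun j => |v j|) (fun _ _ => abs_nonneg _) (mem_univ i)

theorem norm1_eq_zero {v : Fin (d + 1) → ℤ} : norm1 v = 0 ↔ v = 0 := by
  simp [norm1, sum_eq_zero_iff_of_nonneg, funext_iff]

theorem norm1_add_le (v w : Fin (d + 1) → ℤ) : norm1 (v + w) ≤ norm1 v + norm1 w := by
  rw [norm1, norm1, norm1, ← sum_add_distrib]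
  exact sum_le_sum fun i _ => abs_add_le _ _

theorem norm1_add_single (v : Fin (d + 1) → ℤ) (i : Fin (d + 1)) (c : ℤ) :
    norm1 (v + Pi.single i c) = norm1 v - |v i| + |v i + c| := by
  simp only [norm1, ← sum_erase_add _ _ (mem_univ i), Pi.add_apply, Pi.single_eq_same]
  rw [sum_congr rfl fun j hj => by rw [Pi.single_eq_of_ne (ne_of_mem_erase hj), add_zero]]
  ring

theorem norm1_add_single_of_apply_eq_zero {v : Fin (d + 1) → ℤ} {i : Fin (d + 1)} (hv : v i = 0)
    (c : ℤ) : norm1 (v + Pi.single i c) = norm1 v + |c| := by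
  simp [norm1_add_single, hv]

theorem norm1_add_single_eq_add_one_or_sub_one (v : Fin (d + 1) → ℤ) (i : Fin (d + 1)) {c : ℤ}
    (hc : c = 1 ∨ c = -1) :
    norm1 (v + Pi.single i c) = norm1 v + 1 ∨ norm1 (v + Pi.single i c) = norm1 v - 1 := by
  rw [norm1_add_single]
  rcases abs_cases (v i) with h1 | h1 <;> rcases abs_cases (v i + c) with h2 | h2 <;> omega

theorem even_norm1_sub_sum (v : Fin (d + 1) → ℤ) : Even (norm1 v - ∑ i, v i) := by
  rw [norm1, ← sum_sub_distrib]
  refine even_sum _ fun i _ => ?_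
  rw [Int.even_iff, Int.abs_eq_natAbs]
  omega

end Norm1

namespace IsRandomWalk

variable {d : ℕ} {P : ℕ → (Fin (d + 1) → ℤ) → (Fin (d + 1) → ℤ) → ℝ}

theorem exists_step_of_succ_ne_zero (hP : IsRandomWalk d P) {n : ℕ} {y w : Fin (d + 1) → ℤ}
    (h : P (n + 1) y w ≠ 0) :
    ∃ i, ∃ c : ℤ, (c = 1 ∨ c = -1) ∧ P n (y + Pi.single i c) w ≠ 0 := by
  rw [hP.step] at h
  rcases ne_or_eq (∑ i, P 1 y (y + unitVec d i) * P n (y + unitVec d i) w) 0 with hup | hup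
  · obtain ⟨i, -, hi⟩ := exists_ne_zero_of_sum_ne_zero hup
    exact ⟨i, 1, .inl rfl, right_ne_zero_of_mul hi⟩
  · rw [hup, zero_add] at h
    obtain ⟨i, -, hi⟩ := exists_ne_zero_of_sum_ne_zero h
    refine ⟨i, -1, .inr rfl, ?_⟩
    rw [Pi.single_neg, ← sub_eq_add_neg]
    exact right_ne_zero_of_mul hi

/-- Each step of the walk changes `‖w - y‖₁` by exactly `±1`. -/
theorem norm1_le_of_ne_zero (hP : IsRandomWalk d P) {s : ℕ} {y w : Fin (d + 1) → ℤ}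
    (h : P s y w ≠ 0) : norm1 (w - y) ≤ s ∧ Even ((s : ℤ) - norm1 (w - y)) := by
  induction s generalizing y with
  | zero =>
    have hwy : w = y := by by_contra hne; simp [hP.init, hne] at h
    simp [hwy, norm1]
  | succ n ih =>
    obtain ⟨i, c, hc, hn⟩ := hP.exists_step_of_succ_ne_zero h
    obtain ⟨hle, hpar⟩ := ih hn
    have hwy : w - y = (w - (y + Pi.single i c)) + Pi.single i c := by abel
    rw [hwy, Int.even_iff]
    rw [Int.even_iff] at hpar
    push_cast
    rcases norm1_add_single_eq_add_one_or_sub_one (w - (y + Pi.single i c)) i hc with h' | h' <;>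
      omega

theorem sub_single_pos (hP : IsRandomWalk d P) (s : ℕ) (y : Fin (d + 1) → ℤ) (i : Fin (d + 1)) :
    0 < P s y (y - Pi.single i (s : ℤ)) := by
  induction s generalizing y with
  | zero => simp [hP.init]
  | succ n ih =>
    have hdown : y - Pi.single i ((n + 1 : ℕ) : ℤ) = y - unitVec d i - Pi.single i (n : ℤ) := by
      rw [unitVec, sub_sub, ← Pi.single_add]
      push_cast
      ring_nf
    rw [hP.step]
    refine add_pos_of_nonneg_of_pos
      (sum_nonneg fun j _ => mul_nonneg (hP.nonneg _ _ _) (hP.nonneg _ _ _)) ?_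
    refine lt_of_lt_of_le ?_ (single_le_sum (fun j _ => mul_nonneg (hP.nonneg _ _ _)
      (hP.nonneg _ _ _)) (mem_univ i))
    rw [hdown]
    exact mul_pos (hP.pos_sub y i) (ih _)

end IsRandomWalk

theorem Pi.add_single_inj_of_apply_eq_zero {ι M : Type*} [DecidableEq ι] [AddCommGroup M]
    {i : ι} {v v' : ι → M} (hv : v i = 0) (hv' : v' i = 0) {a a' : M}
    (h : v + Pi.single i a = v' + Pi.single i a') : v = v' ∧ a = a' := by
  have ha : a = a' := by simpa [hv, hv'] using congrFun h i
  subst ha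
  exact ⟨add_right_cancel h, rfl⟩

section Sset

variable {d t : ℕ} {x : Fin (d + 1) → ℤ}

theorem mem_Sset {p : ℕ × (Fin (d + 1) → ℤ)} :
    p ∈ Sset d t x ↔ 1 ≤ p.1 ∧ p.1 ≤ t ∧ p.2 (Fin.last d) = 0 ∧
      norm1 (p.2 - x) ≤ (t : ℤ) - p.1 ∧ Even ((t : ℤ) - p.1 - norm1 (p.2 - x)) := by
  simp only [Sset, mem_filter, mem_product, mem_Icc, Fintype.mem_piFinset]
  refine ⟨fun ⟨⟨hs, _⟩, hp⟩ => ⟨hs.1, hs.2, hp⟩,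
    fun ⟨h1, h2, hp⟩ => ⟨⟨⟨h1, h2⟩, fun i => ?_⟩, hp⟩⟩
  have hi := (abs_apply_le_norm1 (p.2 - x) i).trans hp.2.1
  rw [Pi.sub_apply, abs_le] at hi
  omega

theorem self_mem_Sset (ht : 1 ≤ t) (hx : x (Fin.last d) = 0) : (t, x) ∈ Sset d t x :=
  mem_Sset.2 ⟨ht, le_rfl, hx, by simp [norm1]⟩

/-- With `z` the projection of `w` to `∂B`: `‖w - y‖₁ = ‖z - y‖₁ + |w_d|`, the triangle
inequality through `y`, and parities tracked via `‖v‖₁ ≡ ∑ i, v i (mod 2)`. -/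
theorem IsRandomWalk.mem_Sset_of_ne_zero {P : ℕ → (Fin (d + 1) → ℤ) → (Fin (d + 1) → ℤ) → ℝ}
    (hP : IsRandomWalk d P) {s : ℕ} {y w : Fin (d + 1) → ℤ} (hs : (s, y) ∈ Sset d t x)
    (hPw : P s y w ≠ 0) (hw : w (Fin.last d) ≠ 0) :
    ((w (Fin.last d)).natAbs, Function.update w (Fin.last d) 0) ∈ Sset d t x := by
  obtain ⟨hs1, hst, hy, hyx, hyx_even⟩ := mem_Sset.1 hs
  dsimp only at hs1 hst hy hyx hyx_even
  obtain ⟨hwy, hwy_even⟩ := hP.norm1_le_of_ne_zero hPw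
  set z := Function.update w (Fin.last d) 0
  have hz : z (Fin.last d) = 0 := Function.update_self _ _ _
  have hzy : (z - y) (Fin.last d) = 0 := by simp [hz, hy]
  have hwz : w - y = (z - y) + Pi.single (Fin.last d) (w (Fin.last d)) := by
    simp only [z, Pi.update_eq_sub_add_single, Pi.single_zero, add_zero]
    abel
  have hnorm : norm1 (w - y) = norm1 (z - y) + |w (Fin.last d)| := by
    rw [hwz, norm1_add_single_of_apply_eq_zero hzy]
  have htri : norm1 (z - x) ≤ norm1 (z - y) + norm1 (y - x) := by
    simpa using norm1_add_le (z - y) (y - x)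
  have hsum : ∑ i, (z - x) i = ∑ i, (z - y) i + ∑ i, (y - x) i := by
    rw [← sum_add_distrib]
    simp
  have he1 := even_norm1_sub_sum (z - x)
  have he2 := even_norm1_sub_sum (z - y)
  have he3 := even_norm1_sub_sum (y - x)
  have hn := norm1_nonneg (z - y)
  rw [Int.even_iff] at hwy_even hyx_even he1 he2 he3
  rw [Int.abs_eq_natAbs] at hnorm
  refine mem_Sset.2 ⟨by omega, by omega, hz, by dsimp only; omega, ?_⟩
  rw [Int.even_iff]
  dsimp only
  omega

end Sset

section Transform

variable {d t : ℕ} {x : Fin (d + 1) → ℤ} {P : ℕ → (Fin (d + 1) → ℤ) → (Fin (d + 1) → ℤ) → ℝ}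

theorem IsRandomWalk.expect_eq_sum_Sset (hP : IsRandomWalk d P) {s : ℕ} {y : Fin (d + 1) → ℤ}
    (hs : (s, y) ∈ Sset d t x) (ε : ℤˣ) {h : (Fin (d + 1) → ℤ) → ℝ}
    (hh : ∀ w, h w ≠ 0 → 0 < ε * w (Fin.last d)) :
    expect P s y h = ∑ q : Sset d t x, h (q.1.2 + Pi.single (Fin.last d) ((ε : ℤ) * q.1.1)) *
      P s y (q.1.2 + Pi.single (Fin.last d) ((ε : ℤ) * q.1.1)) := by
  set lift : ℕ × (Fin (d + 1) → ℤ) → Fin (d + 1) → ℤ :=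
    fun q => q.2 + Pi.single (Fin.last d) ((ε : ℤ) * q.1)
  have hinj : Set.InjOn lift (Sset d t x) := fun q hq q' hq' hqq' => by
    obtain ⟨h2, h1⟩ := Pi.add_single_inj_of_apply_eq_zero (mem_Sset.1 hq).2.2.1
      (mem_Sset.1 hq').2.2.1 hqq'
    exact Prod.ext (by simpa using h1) h2
  have hsupp : Function.support (fun w => h w * P s y w) ⊆ (Sset d t x).image lift := by
    intro w hw
    obtain ⟨hhw, hPw⟩ := mul_ne_zero_iff.1 hw
    have hεw := hh w hhw
    refine mem_image.2 ⟨_, hP.mem_Sset_of_ne_zero hs hPw fun h0 => by simp [h0] at hεw, ?_⟩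
    have hlast : ε * ((w (Fin.last d)).natAbs : ℤ) = w (Fin.last d) := by
      rcases Int.units_eq_one_or ε with rfl | rfl <;>
        rcases abs_cases (w (Fin.last d)) with h | h <;> simp at hεw ⊢ <;> omega
    simp only [lift, hlast, Pi.update_eq_sub_add_single, Pi.single_zero, add_zero, sub_add_cancel]
  rw [_root_.expect, finsum_eq_finsetSum_of_support_subset _ hsupp, sum_image hinj, ← sum_coe_sort]

theorem IsRandomWalk.expect_eq_Wplus_mulVec (hP : IsRandomWalk d P) (p : Sset d t x)
    {f : (Fin (d + 1) → ℤ) → ℝ} (hf : ∀ z, z (Fin.last d) ≤ 0 → f z = 0) :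
    expect P p.1.1 p.1.2 f =
      (Wplus P t x *ᵥ fun q => f (q.1.2 + Pi.single (Fin.last d) (q.1.1 : ℤ))) p := by
  rw [hP.expect_eq_sum_Sset p.2 1 fun w hw => by by_contra! h; exact hw (hf w (by simpa using h))]
  simp only [Units.val_one, one_mul]
  exact sum_congr rfl fun q _ => mul_comm _ _

theorem IsRandomWalk.expect_eq_Wminus_mulVec (hP : IsRandomWalk d P) (p : Sset d t x)
    {g : (Fin (d + 1) → ℤ) → ℝ} (hg : ∀ z, 0 ≤ z (Fin.last d) → g z = 0) :
    expect P p.1.1 p.1.2 g =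
      (Wminus P t x *ᵥ fun q => g (q.1.2 - Pi.single (Fin.last d) (q.1.1 : ℤ))) p := by
  rw [hP.expect_eq_sum_Sset p.2 (-1) fun w hw => by
    by_contra! h; exact hw (hg w (by simpa using h))]
  simp only [Units.val_neg, Units.val_one, neg_one_mul, Pi.single_neg, ← sub_eq_add_neg]
  exact sum_congr rfl fun q _ => mul_comm _ _

theorem IsRandomWalk.Wminus_eq_zero_of_le (hP : IsRandomWalk d P) {p q : Sset d t x}
    (hpq : p.1.1 ≤ q.1.1) (hne : p ≠ q) : Wminus P t x p q = 0 := by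
  by_contra h
  obtain ⟨hle, -⟩ := hP.norm1_le_of_ne_zero h
  have hdiff : q.1.2 - Pi.single (Fin.last d) (q.1.1 : ℤ) - p.1.2 =
      (q.1.2 - p.1.2) + Pi.single (Fin.last d) (-(q.1.1 : ℤ)) := by
    rw [Pi.single_neg]
    abel
  have hlast : (q.1.2 - p.1.2) (Fin.last d) = 0 := by
    simp [(mem_Sset.1 q.2).2.2.1, (mem_Sset.1 p.2).2.2.1]
  rw [hdiff, norm1_add_single_of_apply_eq_zero hlast, abs_neg, Nat.abs_cast] at hle
  have h0 : norm1 (q.1.2 - p.1.2) = 0 := by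
    have := norm1_nonneg (q.1.2 - p.1.2)
    omega
  exact hne (Subtype.ext (Prod.ext (by omega) (sub_eq_zero.1 (norm1_eq_zero.1 h0)).symm))

theorem IsRandomWalk.isUnit_det_Wminus (hP : IsRandomWalk d P) (t : ℕ) (x : Fin (d + 1) → ℤ) :
    IsUnit (Wminus P t x).det := by
  have hbt : (Wminus P t x)ᵀ.BlockTriangular fun p => p.1.1 := fun q p hlt =>
    hP.Wminus_eq_zero_of_le hlt.le fun h => hlt.ne (h ▸ rfl)
  rw [isUnit_iff_ne_zero, ← det_transpose, det_eq_prod_diag_of_blockTriangular hbt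
    fun q p hqp hne => hP.Wminus_eq_zero_of_le hqp.ge hne.symm]
  exact prod_ne_zero_iff.2 fun p _ => (hP.sub_single_pos _ _ _).ne'

variable (P) in
theorem Ntrans_of_nonneg (f : (Fin (d + 1) → ℤ) → ℝ) {w : Fin (d + 1) → ℤ}
    (hw : 0 ≤ w (Fin.last d)) : Ntrans P f w = 0 :=
  dif_neg fun hm => by have := (mem_Sset.1 hm).1; omega

variable (P) in
theorem Ntrans_sub_single (f : (Fin (d + 1) → ℤ) → ℝ) (ht : 1 ≤ t) (hx : x (Fin.last d) = 0) :
    Ntrans P f (x - Pi.single (Fin.last d) (t : ℤ)) =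
      (Nmat P t x *ᵥ fun p => f (p.1.2 + Pi.single (Fin.last d) (p.1.1 : ℤ)))
        ⟨(t, x), self_mem_Sset ht hx⟩ := by
  unfold Ntrans
  generalize hT : (-(x - Pi.single (Fin.last d) (t : ℤ) : Fin (d + 1) → ℤ) (Fin.last d)).toNat = T
  generalize hX : Function.update (x - Pi.single (Fin.last d) (t : ℤ)) (Fin.last d) 0 = X
  obtain rfl : T = t := by simp [← hT, hx]
  obtain rfl : X = x := by
    rw [← hX, Pi.update_eq_sub_add_single]
    simp [hx, Pi.single_neg]
  exact dif_pos _

theorem exists_eq_sub_single_of_neg {w : Fin (d + 1) → ℤ} (hw : w (Fin.last d) < 0) :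
    ∃ (t : ℕ) (x : Fin (d + 1) → ℤ),
      1 ≤ t ∧ x (Fin.last d) = 0 ∧ w = x - Pi.single (Fin.last d) (t : ℤ) := by
  refine ⟨(-w (Fin.last d)).toNat, Function.update w (Fin.last d) 0, by omega,
    Function.update_self _ _ _, ?_⟩
  rw [Pi.update_eq_sub_add_single, Int.toNat_of_nonneg (by omega)]
  simp [Pi.single_neg]

end Transform

/-- Uniqueness: any map `N'` sending functions vanishing outside `B` to
functions vanishing outside `Bᶜ ∖ ∂B` and satisfying `E[f(Z^x_t)] = E[N' f(Z^x_t)]` for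
all `(t,x) ∈ ℕ × ∂B`, `t ≥ 1`, coincides with `N`. -/
theorem stmt_12 (d : ℕ) (P : ℕ → (Fin (d + 1) → ℤ) → (Fin (d + 1) → ℤ) → ℝ)
    (hP : IsRandomWalk d P)
    (N' : ((Fin (d + 1) → ℤ) → ℝ) → ((Fin (d + 1) → ℤ) → ℝ))
    (hsupp : ∀ f : (Fin (d + 1) → ℤ) → ℝ, (∀ z, z (Fin.last d) ≤ 0 → f z = 0) →
      ∀ z, 0 ≤ z (Fin.last d) → N' f z = 0)
    (hagree : ∀ f : (Fin (d + 1) → ℤ) → ℝ, (∀ z, z (Fin.last d) ≤ 0 → f z = 0) →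
      ∀ t : ℕ, 1 ≤ t → ∀ x : Fin (d + 1) → ℤ, x (Fin.last d) = 0 →
        expect P t x f = expect P t x (N' f)) :
    ∀ f : (Fin (d + 1) → ℤ) → ℝ, (∀ z, z (Fin.last d) ≤ 0 → f z = 0) →
      N' f = Ntrans P f := by
  intro f hf
  funext w
  rcases le_or_gt 0 (w (Fin.last d)) with hw | hw
  · rw [hsupp f hf w hw, Ntrans_of_nonneg P f hw]
  obtain ⟨t, x, ht, hx, rfl⟩ := exists_eq_sub_single_of_neg hw
  have hW : Wminus P t x *ᵥ (fun q => N' f (q.1.2 - Pi.single (Fin.last d) (q.1.1 : ℤ))) =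
      Wplus P t x *ᵥ fun q => f (q.1.2 + Pi.single (Fin.last d) (q.1.1 : ℤ)) := by
    funext p
    obtain ⟨hs, -, hy, -⟩ := mem_Sset.1 p.2
    rw [← hP.expect_eq_Wminus_mulVec p (hsupp f hf), ← hP.expect_eq_Wplus_mulVec p hf]
    exact (hagree f hf _ hs _ hy).symm
  rw [Ntrans_sub_single P f ht hx, Nmat, inv_mul_mulVec_eq (hP.isUnit_det_Wminus t x) hW]
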